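/- arXiv:math/0305137 — 2 statements merged into one kernel-verified Lean document; each statement's English description precedes it below -/
import Mathlib

section
/- Let A be a subring of the polynomial ring K[X] given by A = K[X^2, X^3], where K is a field of characteristic 2. Then the ideal a = (X^2)·A of A is not F-closed: X^3 ∉ a, but (X^3)^2 ∈ a^{[2]}. -/
/-!
Every element of `A = K[X², X³]` has vanishing coefficient of `X`, so `X³ = X² · a` with `a ∈ A`
is impossible (compare coefficients of `X³`). On the other hand `(X³)² = X² · (X²)²` lies in the
ideal generated by the square of `X²`.
-/

/-- The ideal `b^{[p^n]}` generated by `p^n`-th powers of elements of `b`. -/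
def FrobPow {R : Type*} [CommRing R] (p n : ℕ) (b : Ideal R) : Ideal R :=
  Ideal.span ((fun x => x ^ p ^ n) '' (b : Set R))

open Polynomial

theorem pow_mem_frobPow {R : Type*} [CommRing R] {b : Ideal R} {x : R} (p n : ℕ) (hx : x ∈ b) :
    x ^ p ^ n ∈ FrobPow p n b :=
  Ideal.subset_span ⟨x, hx, rfl⟩

theorem coeff_one_eq_zero_of_mem_adjoin_X_sq_X_cube {R : Type*} [CommSemiring R] {p : R[X]}
    (hp : p ∈ Algebra.adjoin R ({X ^ 2, X ^ 3} : Set R[X])) : p.coeff 1 = 0 := by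
  induction hp using Algebra.adjoin_induction with
  | mem x hx => rcases hx with rfl | rfl <;> simp [coeff_X_pow]
  | algebraMap r => simp
  | add x y _ _ hx hy => simp [hx, hy]
  | mul x y _ _ hx hy => simp [coeff_mul, Finset.Nat.antidiagonal_succ, hx, hy]

theorem X_cube_notMem_span_X_sq {R : Type*} [CommRing R] [Nontrivial R]
    {x2 x3 : Algebra.adjoin R ({X ^ 2, X ^ 3} : Set R[X])}
    (hx2 : (x2 : R[X]) = X ^ 2) (hx3 : (x3 : R[X]) = X ^ 3) : x3 ∉ Ideal.span {x2} := by
  intro h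
  obtain ⟨a, ha⟩ := Ideal.mem_span_singleton'.mp h
  have hX : (x3 : R[X]) = a * x2 := by rw [← ha, Subalgebra.coe_mul]
  rw [hx2, hx3] at hX
  have hcoeff := congrArg (coeff · 3) hX
  simp only [coeff_mul_X_pow', coeff_X_pow_self, coeff_one_eq_zero_of_mem_adjoin_X_sq_X_cube a.2,
    show (2 : ℕ) ≤ 3 by norm_num, if_true] at hcoeff
  exact one_ne_zero hcoeff

theorem adjoin_sq_cube_not_fClosed_general {K : Type*} [Field K]
    (x2 x3 : Algebra.adjoin K ({Polynomial.X ^ 2, Polynomial.X ^ 3} : Set (Polynomial K)))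
    (hx2 : (x2 : Polynomial K) = Polynomial.X ^ 2)
    (hx3 : (x3 : Polynomial K) = Polynomial.X ^ 3) :
    x3 ∉ Ideal.span {x2} ∧ x3 ^ 2 ∈ FrobPow 2 1 (Ideal.span {x2}) ∧
      ¬ (∀ (r : Algebra.adjoin K ({Polynomial.X ^ 2, Polynomial.X ^ 3} : Set (Polynomial K)))
          (n : ℕ), r ^ 2 ^ n ∈ FrobPow 2 n (Ideal.span {x2}) → r ∈ Ideal.span {x2}) := by
  have h_not_mem := X_cube_notMem_span_X_sq hx2 hx3
  have h_sq : x3 ^ 2 = x2 * x2 ^ 2 ^ 1 := Subtype.ext <| by push_cast [hx2, hx3]; ring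
  have h_sq_mem : x3 ^ 2 ∈ FrobPow 2 1 (Ideal.span {x2}) := h_sq ▸
    Ideal.mul_mem_left _ _ (pow_mem_frobPow 2 1 (Ideal.mem_span_singleton_self x2))
  exact ⟨h_not_mem, h_sq_mem, fun h => h_not_mem (h x3 1 (by rwa [pow_one]))⟩

theorem adjoin_sq_cube_not_fClosed {K : Type*} [Field K] [CharP K 2]
    (x2 x3 : Algebra.adjoin K ({Polynomial.X ^ 2, Polynomial.X ^ 3} : Set (Polynomial K)))
    (hx2 : (x2 : Polynomial K) = Polynomial.X ^ 2)
    (hx3 : (x3 : Polynomial K) = Polynomial.X ^ 3) :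
    x3 ∉ Ideal.span {x2} ∧ x3 ^ 2 ∈ FrobPow 2 1 (Ideal.span {x2}) ∧
      ¬ (∀ (r : Algebra.adjoin K ({Polynomial.X ^ 2, Polynomial.X ^ 3} : Set (Polynomial K)))
          (n : ℕ), r ^ 2 ^ n ∈ FrobPow 2 n (Ideal.span {x2}) → r ∈ Ideal.span {x2}) :=
  adjoin_sq_cube_not_fClosed_general x2 x3 hx2 hx3
end

section
/- Let R be a commutative Noetherian ring of prime characteristic p with a p^{m₀}-weak test element c for some m₀ ∈ ℕ, let a be a proper ideal of R, and suppose (a_n) is an f-sequence of ideals with a^{[p^n]} ⊆ a_n ⊆ (a^{[p^n]})^* for all n, which has h-linear growth of primary decompositions for some h ∈ ℕ. Then for each u ∈ R, a^*·R_u = (a·R_u)^* in the localization R_u at the powers of u. -/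
/-- `R°`: the complement of the union of the minimal primes of `R`. -/
def RingCirc (R : Type*) [CommRing R] : Set R := {c | ∀ P ∈ minimalPrimes R, c ∉ P}

/-- The tight closure of an ideal `b`. -/
def TightClosure {R : Type*} [CommRing R] (p : ℕ) (b : Ideal R) : Set R :=
  {r | ∃ c ∈ RingCirc R, ∃ N : ℕ, ∀ n ≥ N, c * r ^ p ^ n ∈ FrobPow p n b}

/-- `c` is a `p^{m₀}`-weak test element. -/
def IsWeakTestElement {R : Type*} [CommRing R] (p m₀ : ℕ) (c : R) : Prop :=
  c ∈ RingCirc R ∧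
    ∀ (b : Ideal R) (r : R), r ∈ TightClosure p b ↔ ∀ n ≥ m₀, c * r ^ p ^ n ∈ FrobPow p n b

/-- `q : Fin k → Ideal R` is a minimal primary decomposition of `I`. -/
def IsMinimalPrimaryDecomposition {R : Type*} [CommRing R] (I : Ideal R) {k : ℕ}
    (q : Fin k → Ideal R) : Prop :=
  (∀ i, (q i).IsPrimary) ∧ I = ⨅ i, q i ∧
    Function.Injective (fun i => (q i).radical) ∧
    ∀ i : Fin k, ¬ (⨅ j ∈ ({i}ᶜ : Set (Fin k)), q j) ≤ q i

section Helpers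
variable {A : Type*} [CommRing A] {p : ℕ}

lemma isPrime_of_mem_minPrimes {P : Ideal A} (hP : P ∈ minimalPrimes A) : P.IsPrime := hP.1.1

lemma RingCirc.mul' {x y : A} (hx : x ∈ RingCirc A) (hy : y ∈ RingCirc A) :
    x * y ∈ RingCirc A := by
  intro P hP hmem
  rcases (isPrime_of_mem_minPrimes hP).mem_or_mem hmem with hm | hm
  · exact hx P hP hm
  · exact hy P hP hm

lemma RingCirc.pow' {x : A} (hx : x ∈ RingCirc A) (k : ℕ) : x ^ k ∈ RingCirc A := by
  induction k with
  | zero =>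
    intro P hP hmem
    rw [pow_zero] at hmem
    exact (isPrime_of_mem_minPrimes hP).ne_top ((Ideal.eq_top_iff_one _).mpr hmem)
  | succ k ih => rw [pow_succ]; exact RingCirc.mul' ih hx

lemma frob_add (hp : p.Prime) (hp0 : (p : A) = 0) (x y : A) (n : ℕ) :
    (x + y) ^ p ^ n = x ^ p ^ n + y ^ p ^ n := by
  obtain ⟨r, hr⟩ := exists_add_pow_prime_pow_eq hp x y n
  rw [hr, hp0]; ring

lemma mem_frobPow_of_mem {b : Ideal A} {x : A} (hx : x ∈ b) (n : ℕ) :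
    x ^ p ^ n ∈ FrobPow p n b :=
  Ideal.subset_span ⟨x, hx, rfl⟩

lemma frobPow_span (hp : p.Prime) (hp0 : (p : A) = 0) (n : ℕ) (s : Set A) :
    FrobPow p n (Ideal.span s) = Ideal.span ((fun x => x ^ p ^ n) '' s) := by
  apply le_antisymm
  · rw [FrobPow, Ideal.span_le]
    rintro _ ⟨x, hx, rfl⟩
    simp only [SetLike.mem_coe]
    induction hx using Submodule.span_induction with
    | mem z hz => exact Ideal.subset_span ⟨z, hz, rfl⟩
    | zero =>
      rw [zero_pow (pow_pos hp.pos n).ne']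
      exact Ideal.zero_mem _
    | add z w _ _ hz hw =>
      rw [frob_add hp hp0]
      exact Ideal.add_mem _ hz hw
    | smul r z _ hz =>
      rw [smul_eq_mul, mul_pow]
      exact Ideal.mul_mem_left _ _ hz
  · exact Ideal.span_mono (Set.image_mono Ideal.subset_span)

lemma frobPow_map {B : Type*} [CommRing B] (φ : A →+* B) (hp : p.Prime) (hp0 : (p : B) = 0)
    (n : ℕ) (I : Ideal A) :
    Ideal.map φ (FrobPow p n I) = FrobPow p n (Ideal.map φ I) := by
  have hfun : (fun x : A => φ (x ^ p ^ n)) = fun x : A => (φ x) ^ p ^ n := by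
    funext x; exact φ.map_pow x (p ^ n)
  calc Ideal.map φ (FrobPow p n I)
      = Ideal.span (φ '' ((fun x => x ^ p ^ n) '' (I : Set A))) := Ideal.map_span φ _
    _ = Ideal.span ((fun x => x ^ p ^ n) '' (φ '' (I : Set A))) := by
        rw [Set.image_image, Set.image_image, hfun]
    _ = FrobPow p n (Ideal.map φ I) := (frobPow_span hp hp0 n _).symm

lemma frobPow_frobPow (hp : p.Prime) (hp0 : (p : A) = 0) (m n : ℕ) (b : Ideal A) :
    FrobPow p m (FrobPow p n b) = FrobPow p (m + n) b :=
  calc FrobPow p m (FrobPow p n b)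
      = Ideal.span ((fun x => x ^ p ^ m) '' ((fun x => x ^ p ^ n) '' (b : Set A))) :=
        frobPow_span hp hp0 m _
    _ = FrobPow p (m + n) b := by
        have hfun : (fun x : A => (x ^ p ^ n) ^ p ^ m) = fun x : A => x ^ p ^ (m + n) := by
          funext x
          rw [← pow_mul, ← pow_add, add_comm n m]
        rw [Set.image_image, hfun]
        rfl

lemma exists_ann {P : Ideal A} (hP : P ∈ minimalPrimes A) {u : A} (hu : u ∈ P) :
    ∃ s, s ∉ P ∧ ∃ w : ℕ, s * u ^ w = 0 := by
  haveI := isPrime_of_mem_minPrimes hP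
  have hnil : IsNilpotent (algebraMap A (Localization P.primeCompl) u) := by
    haveI : Ring.KrullDimLE 0 (Localization.AtPrime P) := .of_isLocalization _ hP _
    rw [Ring.KrullDimLE.isNilpotent_iff_mem_maximalIdeal]
    exact (IsLocalization.AtPrime.to_map_mem_maximal_iff _ P u).mpr hu
  obtain ⟨w, hw⟩ := hnil
  rw [← map_pow] at hw
  obtain ⟨⟨s, hs⟩, hsw⟩ := (IsLocalization.map_eq_zero_iff P.primeCompl _ _).mp hw
  exact ⟨s, hs, w, hsw⟩

lemma minimal_incomp {P Q : Ideal A} (hP : P ∈ minimalPrimes A) (hQ : Q ∈ minimalPrimes A)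
    (hne : Q ≠ P) : ∃ d, d ∈ Q ∧ d ∉ P := by
  by_contra hcon
  push_neg at hcon
  have hle : Q ≤ P := fun d hd => by
    by_contra hdP
    exact hdP (hcon d hd)
  exact hne (le_antisymm hle (hP.2 hQ.1 hle))

lemma exists_good_mult [IsNoetherianRing A] (u c₁ : A)
    (hc₁ : ∀ Q ∈ minimalPrimes A, u ∉ Q → c₁ ∉ Q) :
    ∃ c' ∈ RingCirc A, ∃ w : ℕ, u ^ w * c' = u ^ w * c₁ := by
  classical
  have hfin : (minimalPrimes A).Finite := minimalPrimes.finite_of_isNoetherianRing A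
  set T : Finset (Ideal A) := hfin.toFinset with hT
  have hTmem : ∀ P : Ideal A, P ∈ T ↔ P ∈ minimalPrimes A := by
    intro P; rw [hT, Set.Finite.mem_toFinset]
  set Bad : Finset (Ideal A) := T.filter (fun P => u ∈ P ∧ c₁ ∈ P) with hBad
  have hex : ∀ P : Ideal A, ∃ ε : A,
      P ∈ Bad → (ε ∉ P ∧ (∃ w, ε * u ^ w = 0) ∧ ∀ P' ∈ T, P' ≠ P → ε ∈ P') := by
    intro P
    by_cases hPB : P ∈ Bad
    · obtain ⟨hPT, huP, hcP⟩ := Finset.mem_filter.mp hPB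
      have hPmin : P ∈ minimalPrimes A := (hTmem P).mp hPT
      haveI hPp := isPrime_of_mem_minPrimes hPmin
      obtain ⟨s, hsP, w, hsw⟩ := exists_ann hPmin huP
      have hd : ∀ P' : Ideal A, ∃ d : A, P' ∈ T.erase P → d ∈ P' ∧ d ∉ P := by
        intro P'
        by_cases hP' : P' ∈ T.erase P
        · obtain ⟨hne, hP'T⟩ := Finset.mem_erase.mp hP'
          obtain ⟨d, hd1, hd2⟩ := minimal_incomp hPmin ((hTmem P').mp hP'T) hne
          exact ⟨d, fun _ => ⟨hd1, hd2⟩⟩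
        · exact ⟨0, fun hcon => absurd hcon hP'⟩
      choose d hdp using hd
      refine ⟨s * ∏ P' ∈ T.erase P, d P', fun _ => ⟨?_, ⟨w, ?_⟩, ?_⟩⟩
      · intro hmem
        have hprod : (∏ P' ∈ T.erase P, d P') ∈ P.primeCompl :=
          Submonoid.prod_mem _ (fun P' hP' => (hdp P' hP').2)
        exact (P.primeCompl.mul_mem hsP hprod) hmem
      · rw [mul_assoc, mul_comm (∏ P' ∈ T.erase P, d P') (u ^ w), ← mul_assoc, hsw, zero_mul]
      · intro P' hP'T hne
        have hP'e : P' ∈ T.erase P := Finset.mem_erase.mpr ⟨hne, hP'T⟩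
        have : (∏ Q ∈ T.erase P, d Q) ∈ P' := by
          rw [← Finset.mul_prod_erase _ _ hP'e]
          exact Ideal.mul_mem_right _ _ (hdp P' hP'e).1
        exact Ideal.mul_mem_left _ _ this
    · exact ⟨0, fun hcon => absurd hcon hPB⟩
  choose ε hε using hex
  have hwex : ∀ P : Ideal A, ∃ w : ℕ, P ∈ Bad → ε P * u ^ w = 0 := by
    intro P
    by_cases hPB : P ∈ Bad
    · obtain ⟨w, hw⟩ := (hε P hPB).2.1
      exact ⟨w, fun _ => hw⟩
    · exact ⟨0, fun hcon => absurd hcon hPB⟩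
  choose wf hwf using hwex
  set w := Bad.sup wf with hwdef
  set e := ∑ P ∈ Bad, ε P with he
  refine ⟨c₁ + e, ?_, w, ?_⟩
  · intro P hPmin hmem
    haveI hPp := isPrime_of_mem_minPrimes hPmin
    have hPT : P ∈ T := (hTmem P).mpr hPmin
    by_cases hPB : P ∈ Bad
    · have hcP : c₁ ∈ P := (Finset.mem_filter.mp hPB).2.2
      have hrest : (∑ Q ∈ Bad.erase P, ε Q) ∈ P := by
        apply Ideal.sum_mem
        intro Q hQ
        obtain ⟨hne, hQB⟩ := Finset.mem_erase.mp hQ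
        exact (hε Q hQB).2.2 P hPT (Ne.symm hne)
      have hsum : ε P + ∑ Q ∈ Bad.erase P, ε Q = e := by
        rw [he, Finset.add_sum_erase _ _ hPB]
      have : ε P ∈ P := by
        have heq : ε P = (c₁ + e) - c₁ - ∑ Q ∈ Bad.erase P, ε Q := by
          rw [← hsum]; ring
        rw [heq]
        exact Ideal.sub_mem _ (Ideal.sub_mem _ hmem hcP) hrest
      exact (hε P hPB).1 this
    · have heP : e ∈ P := by
        apply Ideal.sum_mem
        intro Q hQB
        have hne : Q ≠ P := fun hQP => hPB (hQP ▸ hQB)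
        exact (hε Q hQB).2.2 P hPT hne.symm
      have hcP : c₁ ∉ P := by
        by_cases huP : u ∈ P
        · intro hcP
          exact hPB (Finset.mem_filter.mpr ⟨hPT, huP, hcP⟩)
        · exact hc₁ P hPmin huP
      exact hcP (by simpa using Ideal.sub_mem _ hmem heP)
  · have hze : u ^ w * e = 0 := by
      rw [he, Finset.mul_sum]
      apply Finset.sum_eq_zero
      intro P hPB
      have hle : wf P ≤ w := Finset.le_sup hPB
      calc u ^ w * ε P = u ^ (w - wf P) * (ε P * u ^ wf P) := by
            rw [← pow_sub_mul_pow u hle]; ring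
        _ = 0 := by rw [hwf P hPB, mul_zero]
    rw [mul_add, hze, add_zero]

lemma primary_absorb {I : Ideal A} {k : ℕ} {q : Fin k → Ideal A} {h n : ℕ}
    (hdec : IsMinimalPrimaryDecomposition I q)
    (hq : ∀ i, (FrobPow p n ((q i).radical)) ^ h ≤ q i)
    {u x : A} {t : ℕ} (hx : u ^ t * x ∈ I) :
    u ^ (p ^ n * h) * x ∈ I := by
  rw [hdec.2.1] at hx ⊢
  rw [Submodule.mem_iInf] at hx ⊢
  intro i
  by_cases hrad : u ∈ (q i).radical
  · have h1 : (u ^ p ^ n) ^ h ∈ (FrobPow p n ((q i).radical)) ^ h :=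
      Ideal.pow_mem_pow (mem_frobPow_of_mem hrad n) h
    have h2 : u ^ (p ^ n * h) ∈ q i := by
      rw [pow_mul]
      exact hq i h1
    exact Ideal.mul_mem_right _ _ h2
  · have hxi : x * u ^ t ∈ q i := by rw [mul_comm]; exact hx i
    rcases (Ideal.isPrimary_iff.mp (hdec.1 i)).2 hxi with hxq | hur
    · exact Ideal.mul_mem_left _ _ hxq
    · exact absurd (Ideal.mem_radical_of_pow_mem hur) hrad

lemma tc_ideal (hp : p.Prime) (hp0 : (p : A) = 0) {c₀ : A} (hc₀ : c₀ ∈ RingCirc A)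
    (b : Ideal A) : ∃ J : Ideal A, (J : Set A) = TightClosure p b := by
  refine ⟨{ carrier := TightClosure p b, add_mem' := ?_, zero_mem' := ?_, smul_mem' := ?_ }, rfl⟩
  · rintro x y ⟨cx, hcx, Nx, hx⟩ ⟨cy, hcy, Ny, hy⟩
    refine ⟨cx * cy, RingCirc.mul' hcx hcy, max Nx Ny, fun n hn => ?_⟩
    rw [frob_add hp hp0]
    have h1 := hx n (le_trans (le_max_left _ _) hn)
    have h2 := hy n (le_trans (le_max_right _ _) hn)
    have heq : cx * cy * (x ^ p ^ n + y ^ p ^ n)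
        = cy * (cx * x ^ p ^ n) + cx * (cy * y ^ p ^ n) := by ring
    rw [heq]
    exact Ideal.add_mem _ (Ideal.mul_mem_left _ _ h1) (Ideal.mul_mem_left _ _ h2)
  · refine ⟨c₀, hc₀, 0, fun n _ => ?_⟩
    rw [zero_pow (pow_pos hp.pos n).ne', mul_zero]
    exact Ideal.zero_mem _
  · rintro s x ⟨cx, hcx, N, hx⟩
    refine ⟨cx, hcx, N, fun n hn => ?_⟩
    have h1 := hx n hn
    rw [smul_eq_mul, mul_pow]
    have heq : cx * (s ^ p ^ n * x ^ p ^ n) = s ^ p ^ n * (cx * x ^ p ^ n) := by ring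
    rw [heq]
    exact Ideal.mul_mem_left _ _ h1

end Helpers

section Loc
variable {A : Type*} [CommRing A] (u : A)

local notation "SS" => Localization.Away u
local notation "φφ" => algebraMap A (Localization.Away u)

lemma disjoint_powers {Q : Ideal A} (hQ : Q.IsPrime) (hu : u ∉ Q) :
    Disjoint ((Submonoid.powers u : Submonoid A) : Set A) (Q : Set A) := by
  rw [Set.disjoint_left]
  rintro x ⟨k, rfl⟩ hxQ
  exact hu (hQ.mem_of_pow_mem k hxQ)

lemma map_unit_powers (m : A) (hm : m ∈ Submonoid.powers u) : IsUnit (φφ m) :=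
  IsLocalization.map_units (Localization.Away u) (⟨m, hm⟩ : Submonoid.powers u)

lemma map_minimal {Q : Ideal A} (hQ : Q ∈ minimalPrimes A) (hu : u ∉ Q) :
    Q.map φφ ∈ minimalPrimes SS ∧ (Q.map φφ).comap φφ = Q := by
  have hQp : Q.IsPrime := isPrime_of_mem_minPrimes hQ
  have hdisj := disjoint_powers u hQp hu
  have hprime : (Q.map φφ).IsPrime :=
    IsLocalization.isPrime_of_isPrime_disjoint (Submonoid.powers u) SS Q hQp hdisj
  have hcomap : (Q.map φφ).comap φφ = Q :=
    IsLocalization.comap_map_of_isPrime_disjoint (Submonoid.powers u) SS hQp hdisj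
  refine ⟨⟨⟨hprime, bot_le⟩, ?_⟩, hcomap⟩
  rintro Q' ⟨hQ'p, -⟩ hle
  have h1 : Q'.comap φφ ≤ Q := hcomap ▸ Ideal.comap_mono hle
  have h2 : Q ≤ Q'.comap φφ := hQ.2 ⟨Ideal.IsPrime.comap φφ (hK := hQ'p), bot_le⟩ h1
  calc Q.map φφ ≤ (Q'.comap φφ).map φφ := Ideal.map_mono h2
    _ ≤ Q' := Ideal.map_comap_le

lemma comap_minimal {Q : Ideal SS} (hQ : Q ∈ minimalPrimes SS) :
    Q.comap φφ ∈ minimalPrimes A := by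
  have hQp : Q.IsPrime := isPrime_of_mem_minPrimes hQ
  have hPp : (Q.comap φφ).IsPrime := Ideal.IsPrime.comap φφ
  obtain ⟨P₀, hP₀, hle⟩ := Ideal.exists_minimalPrimes_le (bot_le : (⊥ : Ideal A) ≤ Q.comap φφ)
  have hP₀min : P₀ ∈ minimalPrimes A := hP₀
  have huP₀ : u ∉ P₀ := by
    intro huP
    have hmem : φφ u ∈ Q := Ideal.mem_comap.mp (hle huP)
    exact hQp.ne_top (Q.eq_top_of_isUnit_mem hmem (map_unit_powers u u ⟨1, pow_one u⟩))
  obtain ⟨hmapmin, hcomap⟩ := map_minimal u hP₀min huP₀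
  have hmaple : P₀.map φφ ≤ Q := le_trans (Ideal.map_mono hle) Ideal.map_comap_le
  have hQle : Q ≤ P₀.map φφ := hQ.2 ⟨isPrime_of_mem_minPrimes hmapmin, bot_le⟩ hmaple
  have heq : Q.comap φφ = P₀ := by
    have h1 : Q.comap φφ ≤ P₀ := hcomap ▸ Ideal.comap_mono hQle
    exact le_antisymm h1 hle
  rw [heq]
  exact hP₀min

lemma ringCirc_map {x : A} (hx : x ∈ RingCirc A) : φφ x ∈ RingCirc SS := by
  intro Q hQ hmem
  exact hx _ (comap_minimal u hQ) hmem

end Loc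

theorem tightClosure_localization_at_element {R : Type*} [CommRing R] [IsNoetherianRing R]
    (p : ℕ) (hp : p.Prime) [CharP R p] (m₀ : ℕ) (c : R) (hc : IsWeakTestElement p m₀ c)
    (a : Ideal R) (ha : a ≠ ⊤)
    (aseq : ℕ → Ideal R)
    (hfs : ∀ (n : ℕ) (r : R), r ∈ aseq n ↔ r ^ p ∈ aseq (n + 1))
    (htrap : ∀ n : ℕ, FrobPow p n a ≤ aseq n ∧ (aseq n : Set R) ⊆ TightClosure p (FrobPow p n a))
    (h : ℕ) (hh : 0 < h)
    (hlin : ∀ n : ℕ, ∃ (k : ℕ) (q : Fin k → Ideal R),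
      IsMinimalPrimaryDecomposition (aseq n) q ∧
        ∀ i, (FrobPow p n ((q i).radical)) ^ h ≤ q i)
    (u : R) :
    (Ideal.span ((algebraMap R (Localization.Away u)) '' TightClosure p a) :
        Set (Localization.Away u)) =
      TightClosure p (Ideal.map (algebraMap R (Localization.Away u)) a) := by
  classical
  set S := Localization.Away u with hS
  set φ := algebraMap R S with hφ
  have hp0R : (p : R) = 0 := CharP.cast_eq_zero R p
  have hp0S : (p : S) = 0 := by
    have : (p : S) = φ (p : R) := by rw [map_natCast]
    rw [this, hp0R, map_zero]
  apply Set.Subset.antisymm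
  · -- easy direction
    obtain ⟨JS, hJS⟩ := tc_ideal hp hp0S (ringCirc_map u hc.1) (a.map φ)
    have hsub : φ '' TightClosure p a ⊆ (JS : Set S) := by
      rintro _ ⟨r, hr, rfl⟩
      rw [hJS]
      obtain ⟨c₂, hc₂, N, hN⟩ := hr
      refine ⟨φ c₂, ringCirc_map u hc₂, N, fun n hn => ?_⟩
      have h1 := hN n hn
      have hmem : φ (c₂ * r ^ p ^ n) ∈ (FrobPow p n a).map φ := Ideal.mem_map_of_mem _ h1
      rw [frobPow_map φ hp hp0S] at hmem
      simpa [map_mul, map_pow] using hmem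
    intro s hs
    have : s ∈ JS := Ideal.span_le.mpr hsub hs
    rw [← hJS]
    exact this
  · -- hard direction
    intro s hs
    obtain ⟨d, hd, N, hdN⟩ := hs
    obtain ⟨⟨r₀, m⟩, hsur⟩ := IsLocalization.surj (Submonoid.powers u) s
    obtain ⟨⟨c₁, m'⟩, hdsur⟩ := IsLocalization.surj (Submonoid.powers u) d
    -- c₁ avoids minimal primes not containing u
    have hc₁Q : ∀ Q ∈ minimalPrimes R, u ∉ Q → c₁ ∉ Q := by
      intro Q hQ huQ hcQ
      obtain ⟨hmapmin, hcomap⟩ := map_minimal u hQ huQ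
      have h1 : φ c₁ ∈ Q.map φ := Ideal.mem_map_of_mem _ hcQ
      rw [← hdsur] at h1
      rcases (isPrime_of_mem_minPrimes hmapmin).mem_or_mem h1 with h2 | h2
      · exact hd _ hmapmin h2
      · have h3 : (m' : R) ∈ Q := by rw [← hcomap]; exact h2
        obtain ⟨k', hk'⟩ := m'.2
        rw [← hk'] at h3
        exact huQ ((isPrime_of_mem_minPrimes hQ).mem_of_pow_mem k' h3)
    obtain ⟨c', hc', w, hw⟩ := exists_good_mult u c₁ hc₁Q
    -- key: c' * (u^h * r₀)^{p^n} ∈ aseq n for n ≥ N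
    have key : ∀ n ≥ N, c' * (u ^ h * r₀) ^ p ^ n ∈ aseq n := by
      intro n hn
      have h1 : d * s ^ p ^ n ∈ FrobPow p n (a.map φ) := hdN n hn
      rw [← frobPow_map φ hp hp0S] at h1
      have h2 : φ (c₁ * r₀ ^ p ^ n) ∈ (FrobPow p n a).map φ := by
        have heq : φ (c₁ * r₀ ^ p ^ n)
            = (d * s ^ p ^ n) * (φ (m' : R) * (φ (m : R)) ^ p ^ n) := by
          rw [map_mul, map_pow, ← hdsur, ← hsur]; ring
        rw [heq]
        exact Ideal.mul_mem_right _ _ h1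
      rw [IsLocalization.mem_map_algebraMap_iff (Submonoid.powers u)] at h2
      obtain ⟨⟨y, m''⟩, hym⟩ := h2
      rw [← map_mul] at hym
      obtain ⟨m''', hm'''⟩ := (IsLocalization.eq_iff_exists (Submonoid.powers u) S).mp hym
      obtain ⟨t₂, ht₂⟩ := m''.2
      obtain ⟨t₃, ht₃⟩ := m'''.2
      have hy : (m''' : R) * (y : R) ∈ aseq n :=
        Ideal.mul_mem_left _ _ ((htrap n).1 y.2)
      rw [← hm'''] at hy
      -- hy : m''' * (c₁ * r₀^{p^n} * m'') ∈ aseq n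
      have habs : u ^ (t₂ + t₃ + w) * (c' * r₀ ^ p ^ n) ∈ aseq n := by
        have heq : u ^ (t₂ + t₃ + w) * (c' * r₀ ^ p ^ n)
            = u ^ t₃ * u ^ t₂ * ((u ^ w * c') * r₀ ^ p ^ n) := by ring
        rw [heq, hw]
        have heq2 : u ^ t₃ * u ^ t₂ * (u ^ w * c₁ * r₀ ^ p ^ n)
            = u ^ w * ((m''' : R) * (c₁ * r₀ ^ p ^ n * (m'' : R))) := by
          rw [← ht₂, ← ht₃]; ring
        rw [heq2]
        exact Ideal.mul_mem_left _ _ hy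
      obtain ⟨k₁, q, hdec, hq⟩ := hlin n
      have habs2 := primary_absorb hdec hq habs
      have heq3 : c' * (u ^ h * r₀) ^ p ^ n = u ^ (p ^ n * h) * (c' * r₀ ^ p ^ n) := by
        rw [mul_pow, ← pow_mul, mul_comm h (p ^ n)]
        ring
      rw [heq3]
      exact habs2
    -- conclude u^h * r₀ ∈ TightClosure p a
    have hr' : (u ^ h * r₀) ∈ TightClosure p a := by
      refine ⟨c * c' ^ p ^ m₀, RingCirc.mul' hc.1 (RingCirc.pow' hc' _), m₀ + N,
        fun n hn => ?_⟩
      have hn₁ : n - m₀ ≥ N := by omega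
      have h1 : c' * (u ^ h * r₀) ^ p ^ (n - m₀) ∈ aseq (n - m₀) := key _ hn₁
      have h2 : (c' * (u ^ h * r₀) ^ p ^ (n - m₀)) ∈ TightClosure p (FrobPow p (n - m₀) a) :=
        (htrap (n - m₀)).2 h1
      have h3 := ((hc.2 _ _).mp h2) m₀ (le_refl m₀)
      rw [frobPow_frobPow hp hp0R] at h3
      have hn' : m₀ + (n - m₀) = n := by omega
      rw [hn'] at h3
      have e1 : ((u ^ h * r₀) ^ p ^ (n - m₀)) ^ p ^ m₀ = (u ^ h * r₀) ^ p ^ n := by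
        rw [← pow_mul, ← pow_add, show n - m₀ + m₀ = n from by omega]
      have heq : c * c' ^ p ^ m₀ * (u ^ h * r₀) ^ p ^ n
          = c * (c' * (u ^ h * r₀) ^ p ^ (n - m₀)) ^ p ^ m₀ := by
        rw [mul_pow c' ((u ^ h * r₀) ^ p ^ (n - m₀)) (p ^ m₀), e1]; ring
      rw [heq]
      exact h3
    -- wrap up
    have hφr' : φ (u ^ h * r₀) ∈ Ideal.span (φ '' TightClosure p a) :=
      Ideal.subset_span ⟨_, hr', rfl⟩
    have hmm : ((m : R) * u ^ h) ∈ Submonoid.powers u := by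
      obtain ⟨k, hk⟩ := m.2
      exact ⟨k + h, by simpa [pow_add] using congrArg (· * u ^ h) hk⟩
    obtain ⟨ν, hν⟩ := map_unit_powers u _ hmm
    have heq : s * φ ((m : R) * u ^ h) = φ (u ^ h * r₀) := by
      rw [map_mul, ← mul_assoc, hsur, ← map_mul, mul_comm r₀ (u ^ h)]
    have h5 : ((ν : S) * s) ∈ Ideal.span (φ '' TightClosure p a) := by
      rw [hν, mul_comm, heq]
      exact hφr'
    have h6 := Ideal.mul_mem_left (Ideal.span (φ '' TightClosure p a)) ((ν⁻¹ : Sˣ) : S) h5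
    rwa [Units.inv_mul_cancel_left] at h6
end
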